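/- Let Φ be continuous, positive, T-periodic with mean Φ̄ = (1/T)∫₀ᵀ Φ(t) dt, and suppose σ̃ = Φ̄. If R is a positive solution of R'(t) = μ R(t)(Φ(t) P₀(R(t)) − σ̃/3) with μ > 0, then liminf_{t→∞} R(t) = 0. -/

import Mathlib

noncomputable def P0 (x : ℝ) : ℝ := (x * (Real.cosh x / Real.sinh x) - 1) / x ^ 2

/-!
If `R` stayed above some `ε > 0` from time `t₀` on, then, `P0` being decreasing,
`P0 (R t) ≤ P0 ε < 1/3`, so `(log R)' ≤ μ (Φ P0(ε) - σ/3)`. The right-hand side is `T`-periodic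
with mean `μ σ (P0(ε) - 1/3) < 0`, because `σ` is the mean of `Φ`; integrating, `log R → -∞`,
which contradicts `R > ε`. Hence `R` comes arbitrarily close to `0`, and `R > 0` gives
`liminf R = 0`.
-/

open Real Set Filter

lemma pos_of_hasDerivAt_pos {f f' : ℝ → ℝ} (hf : ∀ x, HasDerivAt f (f' x) x) (h₀ : f 0 = 0)
    (hf' : ∀ x, 0 < x → 0 < f' x) {x : ℝ} (hx : 0 < x) : 0 < f x := by
  have hmono : StrictMonoOn f (Ici 0) :=
    strictMonoOn_of_hasDerivWithinAt_pos (convex_Ici 0)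
      (fun x _ => (hf x).continuousAt.continuousWithinAt) (fun x _ => (hf x).hasDerivWithinAt)
      (by rw [interior_Ici]; exact hf')
  simpa only [h₀] using hmono self_mem_Ici hx.le hx

lemma sinh_lt_mul_cosh {x : ℝ} (hx : 0 < x) : sinh x < x * cosh x := by
  refine sub_pos.1 (pos_of_hasDerivAt_pos (f := fun x => x * cosh x - sinh x)
    (fun x => ?_) (by simp) (fun x hx => mul_pos hx (sinh_pos_iff.2 hx)) hx)
  refine (((hasDerivAt_id' x).mul (hasDerivAt_cosh x)).sub (hasDerivAt_sinh x)).congr_deriv ?_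
  ring

lemma three_mul_sub_sinh_lt {x : ℝ} (hx : 0 < x) :
    3 * (x * cosh x - sinh x) < x ^ 2 * sinh x := by
  refine sub_pos.1 (pos_of_hasDerivAt_pos
    (f := fun x => x ^ 2 * sinh x - 3 * (x * cosh x - sinh x))
    (fun x => ?_) (by simp) (fun x hx => mul_pos hx (sub_pos.2 (sinh_lt_mul_cosh hx))) hx)
  refine (((hasDerivAt_pow 2 x).mul (hasDerivAt_sinh x)).sub
    ((((hasDerivAt_id' x).mul (hasDerivAt_cosh x)).sub (hasDerivAt_sinh x)).const_mul 3)
    ).congr_deriv ?_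
  ring

lemma three_mul_sinh_mul_cosh_lt {x : ℝ} (hx : 0 < x) :
    3 * sinh x * cosh x < 2 * x + x * cosh x ^ 2 + x * sinh x ^ 2 := by
  refine sub_pos.1 (pos_of_hasDerivAt_pos
    (f := fun x => 2 * x + x * cosh x ^ 2 + x * sinh x ^ 2 - 3 * sinh x * cosh x)
    (f' := fun x => 4 * sinh x * (x * cosh x - sinh x))
    (fun x => ?_) (by simp) (fun x hx => ?_) hx)
  · refine ((((hasDerivAt_id' x).const_mul 2).add
      ((hasDerivAt_id' x).mul ((hasDerivAt_cosh x).pow 2))).add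
      ((hasDerivAt_id' x).mul ((hasDerivAt_sinh x).pow 2))).sub
      (((hasDerivAt_sinh x).const_mul 3).mul (hasDerivAt_cosh x)) |>.congr_deriv ?_
    simp only [Pi.pow_apply]
    linear_combination (-2) * cosh_sq_sub_sinh_sq x
  · exact mul_pos (mul_pos four_pos (sinh_pos_iff.2 hx)) (sub_pos.2 (sinh_lt_mul_cosh hx))

lemma two_mul_sinh_sq_lt {x : ℝ} (hx : 0 < x) :
    2 * sinh x ^ 2 < x ^ 2 + x * sinh x * cosh x := by
  refine sub_pos.1 (pos_of_hasDerivAt_pos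
    (f := fun x => x ^ 2 + x * sinh x * cosh x - 2 * sinh x ^ 2)
    (f' := fun x => 2 * x + x * cosh x ^ 2 + x * sinh x ^ 2 - 3 * sinh x * cosh x)
    (fun x => ?_) (by simp) (fun x hx => sub_pos.2 (three_mul_sinh_mul_cosh_lt hx)) hx)
  refine (((hasDerivAt_pow 2 x).add (((hasDerivAt_id' x).mul (hasDerivAt_sinh x)).mul
    (hasDerivAt_cosh x))).sub (((hasDerivAt_sinh x).pow 2).const_mul 2)).congr_deriv ?_
  simp only [Pi.mul_apply]
  ring

-- At `x = 0` both sides are `0` by the convention `a / 0 = 0`.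
lemma P0_eq : P0 = fun x => (x * cosh x - sinh x) / (x ^ 2 * sinh x) := by
  ext x
  rcases eq_or_ne x 0 with rfl | hx
  · simp [P0]
  · have : sinh x ≠ 0 := sinh_ne_zero.2 hx
    rw [P0]
    field_simp

lemma hasDerivAt_P0 {x : ℝ} (hx : 0 < x) :
    HasDerivAt P0 (-(x ^ 2 + x * sinh x * cosh x - 2 * sinh x ^ 2) / (x ^ 3 * sinh x ^ 2)) x := by
  have hs : sinh x ≠ 0 := (sinh_pos_iff.2 hx).ne'
  rw [P0_eq]
  refine ((((hasDerivAt_id' x).mul (hasDerivAt_cosh x)).sub (hasDerivAt_sinh x)).div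
    ((hasDerivAt_pow 2 x).mul (hasDerivAt_sinh x))
    (mul_ne_zero (pow_ne_zero 2 hx.ne') hs)).congr_deriv ?_
  simp only [Pi.mul_apply, Pi.sub_apply]
  field_simp
  linear_combination (-(x ^ 3)) * cosh_sq_sub_sinh_sq x

theorem strictAntiOn_P0 : StrictAntiOn P0 (Ioi 0) :=
  strictAntiOn_of_hasDerivWithinAt_neg (convex_Ioi 0)
    (fun x hx => (hasDerivAt_P0 hx).continuousAt.continuousWithinAt)
    (fun x hx => (hasDerivAt_P0 (interior_subset hx)).hasDerivWithinAt)
    (fun x hx => by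
      rw [interior_Ioi] at hx
      exact div_neg_of_neg_of_pos (neg_neg_of_pos (sub_pos.2 (two_mul_sinh_sq_lt hx)))
        (mul_pos (pow_pos hx 3) (pow_pos (sinh_pos_iff.2 hx) 2)))

theorem P0_lt_one_third {x : ℝ} (hx : 0 < x) : P0 x < 1 / 3 := by
  rw [P0_eq, div_lt_iff₀ (mul_pos (pow_pos hx 2) (sinh_pos_iff.2 hx))]
  linarith [three_mul_sub_sinh_lt hx]

theorem tendsto_atBot_of_hasDerivAt_le_periodic {u u' h : ℝ → ℝ} {T t₀ : ℝ} (hT : 0 < T)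
    (hh : Continuous h) (hper : Function.Periodic h T) (hmean : ∫ t in 0..T, h t < 0)
    (hu : ∀ t ≥ t₀, HasDerivAt u (u' t) t) (hle : ∀ t ≥ t₀, u' t ≤ h t) :
    Tendsto u atTop atBot := by
  set H : ℝ → ℝ := fun t => ∫ s in 0..t, h s
  have hH : ∀ t, HasDerivAt H (h t) t := fun t => (hh.integral_hasStrictDerivAt 0 t).hasDerivAt
  have hanti : AntitoneOn (fun t => u t - H t) (Ici t₀) :=
    antitoneOn_of_hasDerivWithinAt_nonpos (convex_Ici t₀)
      (fun t ht => ((hu t ht).sub (hH t)).continuousAt.continuousWithinAt)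
      (fun t ht => ((hu t (interior_subset ht)).sub (hH t)).hasDerivWithinAt)
      (fun t ht => sub_nonpos.2 (hle t (interior_subset ht)))
  have hHbot : Tendsto H atTop atBot := by
    have := (hper.comp Neg.neg).tendsto_atTop_intervalIntegral_of_pos
      (by simpa only [Function.comp_apply, intervalIntegral.integral_neg, neg_pos] using hmean) hT
    simpa only [Function.comp_def, intervalIntegral.integral_neg, neg_neg] using
      tendsto_neg_atTop_atBot.comp this
  refine tendsto_atBot_mono' atTop ?_ (tendsto_atBot_add_const_left atTop (u t₀ - H t₀) hHbot)
  filter_upwards [eventually_ge_atTop t₀] with t ht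
  linarith [hanti self_mem_Ici ht ht]

theorem liminf_eq_zero_of_frequently_le {α : Type*} {l : Filter α} {f : α → ℝ}
    (hf : ∀ᶠ x in l, 0 ≤ f x) (hfreq : ∀ ε > 0, ∃ᶠ x in l, f x ≤ ε) : liminf f l = 0 := by
  have hbdd : IsBoundedUnder (· ≥ ·) l f := ⟨0, by simpa only [eventually_map] using hf⟩
  have hcobdd : IsCoboundedUnder (· ≥ ·) l f := .of_frequently_le (hfreq 1 one_pos)
  refine le_antisymm (le_of_forall_pos_le_add fun ε hε => ?_) (le_liminf_of_le hcobdd hf)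
  simpa only [zero_add] using liminf_le_of_frequently_le (hfreq ε hε) hbdd

theorem tendsto_log_atBot_of_forall_lt {T μ σ ε t₀ : ℝ} {Φ R : ℝ → ℝ} (hT : 0 < T)
    (hΦc : Continuous Φ) (hΦ : ∀ t, 0 ≤ Φ t) (hΦper : Function.Periodic Φ T) (hμ : 0 < μ)
    (hσ : 0 < σ) (hΦint : ∫ t in 0..T, Φ t = T * σ) (hε : 0 < ε) (hR : ∀ t ≥ t₀, ε < R t)
    (hODE : ∀ t ≥ t₀, HasDerivAt R (μ * R t * (Φ t * P0 (R t) - σ / 3)) t) :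
    Tendsto (fun t => log (R t)) atTop atBot := by
  have hR₀ : ∀ t ≥ t₀, 0 < R t := fun t ht => hε.trans (hR t ht)
  refine tendsto_atBot_of_hasDerivAt_le_periodic hT (h := fun t => μ * (Φ t * P0 ε - σ / 3))
    (by fun_prop) (fun t => by simp only [hΦper t]) ?_
    (fun t ht => (hODE t ht).log (hR₀ t ht).ne') (fun t ht => ?_)
  · rw [intervalIntegral.integral_const_mul, intervalIntegral.integral_sub
      ((hΦc.intervalIntegrable 0 T).mul_const _) intervalIntegrable_const,
      intervalIntegral.integral_mul_const, hΦint, intervalIntegral.integral_const, smul_eq_mul,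
      sub_zero]
    have := P0_lt_one_third hε
    have : 0 < μ * T * σ := by positivity
    nlinarith
  · rw [mul_right_comm, mul_div_cancel_right₀ _ (hR₀ t ht).ne']
    have := hΦ t
    gcongr
    exact strictAntiOn_P0.antitoneOn hε (hR₀ t ht) (hR t ht).le

theorem R_liminf_zero
    (T : ℝ) (hT : 0 < T) (Φ : ℝ → ℝ) (hΦc : Continuous Φ)
    (hΦpos : ∀ t, 0 < Φ t) (hΦper : ∀ t, Φ (t + T) = Φ t)
    (μ σ : ℝ) (hμ : 0 < μ)
    (hmean : σ = (1 / T) * ∫ t in (0 : ℝ)..T, Φ t)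
    (R : ℝ → ℝ) (hRpos : ∀ t, 0 ≤ t → 0 < R t)
    (hODE : ∀ t, 0 ≤ t → HasDerivAt R (μ * R t * (Φ t * P0 (R t) - σ / 3)) t) :
    Filter.liminf R Filter.atTop = 0 := by
  have hΦint : ∫ t in (0 : ℝ)..T, Φ t = T * σ := by
    rw [hmean]; field_simp
  have hσ : 0 < σ := by
    have := intervalIntegral.intervalIntegral_pos_of_pos (hΦc.intervalIntegrable 0 T) hΦpos hT
    rw [hΦint] at this
    exact pos_of_mul_pos_right this hT.le
  refine liminf_eq_zero_of_frequently_le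
    (eventually_atTop.2 ⟨0, fun t ht => (hRpos t ht).le⟩) fun ε hε => ?_
  by_contra hfreq
  obtain ⟨t₀, ht₀⟩ := eventually_atTop.1 ((not_frequently.1 hfreq).and (eventually_ge_atTop 0))
  have hlog := tendsto_log_atBot_of_forall_lt hT hΦc (fun t => (hΦpos t).le) hΦper hμ hσ hΦint
    hε (fun t ht => lt_of_not_ge (ht₀ t ht).1) (fun t ht => hODE t (ht₀ t ht).2)
  obtain ⟨t, hlt, ht⟩ :=
    ((hlog.eventually (eventually_lt_atBot (log ε))).and (eventually_ge_atTop t₀)).exists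
  exact hlt.not_gt (log_lt_log hε (lt_of_not_ge (ht₀ t ht).1))
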